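/- Let σ and σ' be coprime weight vectors, with coordinatewise product σσ'. Let R be the quotient of the disjoint union P(σ') ⊔ P(σ) by the equivalence relation generated by e(σ'/1)(z) ∼ e(σ/1)(z) for all z ∈ ℂP^n, with the quotient topology. Then the map g : R → P(σσ') induced by e(σσ'/σ') on P(σ') and by e(σσ'/σ) on P(σ) is well defined and a homeomorphism. In other words, the commutative square formed by e(σ/1), e(σ'/1), e(σσ'/σ), e(σσ'/σ') is a pushout square of topological spaces. -/

import Mathlib

noncomputable section

/-- The unit sphere in `ℂ^m` (the sphere `S^{2m-1}`). -/
abbrev Sph (m : ℕ) : Type := {z : Fin m → ℂ // ∑ i, ‖z i‖ ^ 2 = 1}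

/-- The relation on the sphere whose quotient is the weighted projective space `P(χ)`:
`z ∼ w` iff `w = t ·_χ z` for some unimodular `t`. -/
def wRel (m : ℕ) (χ : Fin m → ℕ) (z w : Sph m) : Prop :=
  ∃ t : ℂ, ‖t‖ = 1 ∧ ∀ i, (w : Fin m → ℂ) i = t ^ χ i * (z : Fin m → ℂ) i

/-- The weighted projective space `P(χ)`, with the quotient topology. -/
abbrev WP (m : ℕ) (χ : Fin m → ℕ) : Type := Quot (wRel m χ)

/-- The class `[z]_χ` of a point of the sphere in `P(χ)`. -/
def wpMk (m : ℕ) (χ : Fin m → ℕ) (z : Sph m) : WP m χ := Quot.mk _ z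

/-- `s(χ,ω)`: the least positive integer `s` with `ω i ∣ s * χ i` for all `i`. -/
def sVal (m : ℕ) (χ ω : Fin m → ℕ) : ℕ := sInf {s : ℕ | 0 < s ∧ ∀ i, ω i ∣ s * χ i}

/-- The exponents `d i = s(χ,ω)·χ i/ω i` of the map `e(χ/ω)`. -/
def dExp (m : ℕ) (χ ω : Fin m → ℕ) (i : Fin m) : ℕ := sVal m χ ω * χ i / ω i

/-- `IsNorm m χ v w` says that `w` is the normalisation `N_χ(v)`, i.e. `w` lies on the
sphere and has the form `(λ^{χ_0} v_0, …)` for some real `λ > 0`. -/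
def IsNorm (m : ℕ) (χ : Fin m → ℕ) (v : Fin m → ℂ) (w : Sph m) : Prop :=
  ∃ l : ℝ, 0 < l ∧ ∀ i, (w : Fin m → ℂ) i = (l : ℂ) ^ χ i * v i

/-- Coordinatewise powers of a point of the sphere. -/
def powVec (m : ℕ) (d : Fin m → ℕ) (z : Sph m) : Fin m → ℂ :=
  fun i => (z : Fin m → ℂ) i ^ d i

/-- `IsEMap m χ ω e` says that `e` is the canonical map `e(χ/ω) : P(ω) → P(χ)`:
it is continuous and sends `[z]_ω` to `[N_χ(z_0^{d_0}, …, z_n^{d_n})]_χ`. -/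
def IsEMap (m : ℕ) (χ ω : Fin m → ℕ) (e : WP m ω → WP m χ) : Prop :=
  Continuous e ∧ ∀ z w : Sph m,
    IsNorm m χ (powVec m (dExp m χ ω) z) w → e (wpMk m ω z) = wpMk m χ w

/-!
Both composites `ℂP^n → P(σσ')` send `[z]` to `[N(z^{σσ'})]`, so the square commutes, and every
point of `P(σσ')` has this form, so `e(σσ'/σ')` is onto. Two points of `P(σ')` with the same image
under `e(σσ'/σ')` differ by coordinatewise `σ_i`-th roots of unity `ξ_i`. By coprimality
`ξ_i = ρ_i^{σ'_i}` with `ρ_i^{σ_i} = 1`; multiplying a preimage `r` of `x` under `e(σ'/1)` by `ρ`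
gives a preimage of `ξ x` with the same image under `e(σ/1)`, so `x` and `ξ x` are identified in
the pushout. As `e(σ/1)` is onto as well, the induced map is a continuous bijection from a compact
space onto the Hausdorff space `P(σσ')`, hence a homeomorphism.
-/

section WeightedProjectiveSpace

variable {m : ℕ}

lemma Sph.exists_ne_zero (z : Sph m) : ∃ i, z.1 i ≠ 0 := by
  by_contra! h
  simpa [h] using z.2

lemma powVec_ne_zero (d : Fin m → ℕ) (z : Sph m) : powVec m d z ≠ 0 := by
  obtain ⟨i, hi⟩ := Sph.exists_ne_zero z
  exact fun h => hi (pow_eq_zero_iff'.1 (congrFun h i)).1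

lemma Sph.not_lt_one_of_norm_eq_pow_mul {χ : Fin m → ℕ} (hχ : ∀ i, 1 ≤ χ i) {c : ℝ}
    (hc : 0 < c) {w w' : Sph m} (h : ∀ i, ‖w'.1 i‖ = c ^ χ i * ‖w.1 i‖) : ¬ c < 1 := by
  intro hc1
  obtain ⟨j, hj⟩ := Sph.exists_ne_zero w
  have hlt : ∑ i, ‖w'.1 i‖ ^ 2 < ∑ i, ‖w.1 i‖ ^ 2 := by
    refine Finset.sum_lt_sum (fun i _ => ?_) ⟨j, Finset.mem_univ _, ?_⟩
    · rw [h i]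
      gcongr
      exact mul_le_of_le_one_left (norm_nonneg _) (pow_le_one₀ hc.le hc1.le)
    · rw [h j]
      gcongr
      exact mul_lt_of_lt_one_left (norm_pos_iff.2 hj)
        (pow_lt_one₀ hc.le hc1 (Nat.one_le_iff_ne_zero.1 (hχ j)))
  exact hlt.ne (w'.2.trans w.2.symm)

lemma Sph.eq_of_eq_ofReal_pow_mul {χ : Fin m → ℕ} (hχ : ∀ i, 1 ≤ χ i) {c : ℝ} (hc : 0 < c)
    {w w' : Sph m} (h : ∀ i, w'.1 i = (c : ℂ) ^ χ i * w.1 i) : w' = w := by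
  have hnorm : ∀ i, ‖w'.1 i‖ = c ^ χ i * ‖w.1 i‖ := fun i => by
    rw [h i, norm_mul, norm_pow, Complex.norm_of_nonneg hc.le]
  have hc1 : c = 1 := by
    refine le_antisymm (not_lt.1 fun hc1 => ?_)
      (not_lt.1 (Sph.not_lt_one_of_norm_eq_pow_mul hχ hc hnorm))
    refine Sph.not_lt_one_of_norm_eq_pow_mul hχ (inv_pos.2 hc) (w := w') (w' := w)
      (fun i => ?_) (inv_lt_one_of_one_lt₀ hc1)
    rw [hnorm i, inv_pow, inv_mul_cancel_left₀ (pow_ne_zero _ hc.ne')]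
  exact Subtype.ext (funext fun i => by simp [h i, hc1])

lemma exists_isNorm {χ : Fin m → ℕ} (hχ : ∀ i, 1 ≤ χ i) {v : Fin m → ℂ} (hv : v ≠ 0) :
    ∃ w, IsNorm m χ v w := by
  obtain ⟨j, hj⟩ : ∃ j, v j ≠ 0 := Function.ne_iff.1 hv
  let g : ℝ → ℝ := fun l => ∑ i, (l ^ χ i * ‖v i‖) ^ 2
  have hg0 : g 0 = 0 := by
    simp [g, fun i => zero_pow (M₀ := ℝ) (Nat.one_le_iff_ne_zero.1 (hχ i))]
  set M : ℝ := max 1 ‖v j‖⁻¹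
  have hgM : 1 ≤ g M := by
    have hMv : 1 ≤ M * ‖v j‖ := (inv_le_iff_one_le_mul₀ (norm_pos_iff.2 hj)).1 (le_max_right _ _)
    have hM : M ≤ M ^ χ j := le_self_pow₀ (le_max_left _ _) (Nat.one_le_iff_ne_zero.1 (hχ j))
    calc 1 ≤ (M ^ χ j * ‖v j‖) ^ 2 := one_le_pow₀ (hMv.trans (by gcongr))
      _ ≤ g M := Finset.single_le_sum (f := fun i => (M ^ χ i * ‖v i‖) ^ 2)
          (fun i _ => sq_nonneg _) (Finset.mem_univ j)
  obtain ⟨l, ⟨hl0, -⟩, hgl⟩ := intermediate_value_Icc (zero_le_one.trans (le_max_left _ _))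
    (by fun_prop : Continuous g).continuousOn ⟨hg0.le.trans zero_le_one, hgM⟩
  have hl : 0 < l := hl0.lt_of_ne (by rintro rfl; simp [hg0] at hgl)
  refine ⟨⟨fun i => (l : ℂ) ^ χ i * v i, ?_⟩, l, hl, fun i => rfl⟩
  simpa [g, norm_mul, abs_of_pos hl] using hgl

lemma exists_isNorm_powVec_eq {χ : Fin m → ℕ} (hχ : ∀ i, 1 ≤ χ i) (w : Sph m) :
    ∃ r, IsNorm m χ (powVec m χ r) w := by
  choose u hu using fun i => IsAlgClosed.exists_pow_nat_eq (w.1 i) (hχ i)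
  have hu0 : u ≠ 0 := by
    obtain ⟨j, hj⟩ := Sph.exists_ne_zero w
    rintro rfl
    exact hj (by rw [← hu j, Pi.zero_apply, zero_pow (Nat.one_le_iff_ne_zero.1 (hχ j))])
  obtain ⟨r, l, hl, hr⟩ := exists_isNorm (χ := fun _ => 1) (fun _ => le_rfl) hu0
  refine ⟨r, l⁻¹, inv_pos.2 hl, fun i => ?_⟩
  have hlC : (l : ℂ) ≠ 0 := Complex.ofReal_ne_zero.2 hl.ne'
  rw [powVec, hr i, pow_one, ← hu i, Complex.ofReal_inv, ← mul_pow, inv_mul_cancel_left₀ hlC]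

lemma IsNorm.unique {χ : Fin m → ℕ} (hχ : ∀ i, 1 ≤ χ i) {v : Fin m → ℂ} {w w' : Sph m}
    (hw : IsNorm m χ v w) (hw' : IsNorm m χ v w') : w' = w := by
  obtain ⟨l, hl, hw⟩ := hw
  obtain ⟨l', hl', hw'⟩ := hw'
  refine Sph.eq_of_eq_ofReal_pow_mul hχ (div_pos hl' hl) fun i => ?_
  have hlC : (l : ℂ) ≠ 0 := Complex.ofReal_ne_zero.2 hl.ne'
  rw [hw i, hw' i, Complex.ofReal_div, div_pow, ← mul_assoc,
    div_mul_cancel₀ _ (pow_ne_zero _ hlC)]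

lemma IsNorm.trans_powVec {χ ψ d : Fin m → ℕ} (hψ : ∀ i, ψ i = χ i * d i) {z p w : Sph m}
    (hp : IsNorm m χ (powVec m χ z) p) (hw : IsNorm m ψ (powVec m d p) w) :
    IsNorm m ψ (powVec m ψ z) w := by
  obtain ⟨κ, hκ, hp⟩ := hp
  obtain ⟨l, hl, hw⟩ := hw
  refine ⟨l * κ, mul_pos hl hκ, fun i => ?_⟩
  rw [hw i, powVec, hp i, powVec, powVec, hψ i]
  push_cast
  ring

def unitMul (ζ : Fin m → Circle) (z : Sph m) : Sph m :=
  ⟨fun i => ζ i * z.1 i, by simpa only [norm_mul, Circle.norm_coe, one_mul] using z.2⟩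

lemma unitMul_apply (ζ : Fin m → Circle) (z : Sph m) (i : Fin m) :
    (unitMul ζ z).1 i = ζ i * z.1 i :=
  rfl

lemma IsNorm.unitMul {χ : Fin m → ℕ} {v : Fin m → ℂ} {w : Sph m} (ζ : Fin m → Circle)
    (hw : IsNorm m χ v w) : IsNorm m χ (fun i => ζ i * v i) (unitMul ζ w) := by
  obtain ⟨l, hl, hw⟩ := hw
  exact ⟨l, hl, fun i => by rw [unitMul_apply, hw i, mul_left_comm]⟩

lemma continuous_unitMul_pow (χ : Fin m → ℕ) :
    Continuous fun p : Circle × Sph m => unitMul (fun i => p.1 ^ χ i) p.2 :=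
  Continuous.subtype_mk (continuous_pi fun i => by
    simp only [Circle.coe_pow]
    exact ((continuous_subtype_val.comp continuous_fst).pow _).mul
      ((continuous_apply i).comp (continuous_subtype_val.comp continuous_snd))) _

lemma wRel_iff_exists_unitMul (χ : Fin m → ℕ) (z w : Sph m) :
    wRel m χ z w ↔ ∃ t : Circle, w = unitMul (fun i => t ^ χ i) z := by
  refine ⟨fun ⟨t, ht, hw⟩ => ⟨⟨t, mem_sphere_zero_iff_norm.2 ht⟩, Subtype.ext (funext hw)⟩, ?_⟩
  rintro ⟨t, rfl⟩
  exact ⟨t, Circle.norm_coe t, fun i => by rw [unitMul_apply, Circle.coe_pow]⟩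

lemma wRel_equivalence (χ : Fin m → ℕ) : Equivalence (wRel m χ) where
  refl _ := ⟨1, norm_one, fun i => by rw [one_pow, one_mul]⟩
  symm := fun ⟨t, ht, h⟩ => ⟨t⁻¹, by rw [norm_inv, ht, inv_one], fun i => by
    rw [h i, inv_pow, inv_mul_cancel_left₀ (pow_ne_zero _ (norm_ne_zero_iff.1 (ht ▸ one_ne_zero)))]⟩
  trans := fun ⟨t, ht, h⟩ ⟨s, hs, h'⟩ => ⟨s * t, by rw [norm_mul, ht, hs, one_mul], fun i => by
    rw [h' i, h i, mul_pow, mul_assoc]⟩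

lemma wpMk_eq_iff (χ : Fin m → ℕ) (z w : Sph m) : wpMk m χ z = wpMk m χ w ↔ wRel m χ z w :=
  (wRel_equivalence χ).quot_mk_eq_iff z w

instance : CompactSpace (Sph m) := by
  refine isCompact_iff_compactSpace.1 <|
    (isCompact_univ_pi fun _ => isCompact_closedBall 0 1).of_isClosed_subset
      (isClosed_eq (by fun_prop) continuous_const) fun z hz i _ => ?_
  have hi : ‖z i‖ ^ 2 ≤ 1 :=
    hz ▸ Finset.single_le_sum (f := fun i => ‖z i‖ ^ 2) (fun i _ => sq_nonneg _) (Finset.mem_univ i)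
  simpa using (sq_le_one_iff₀ (norm_nonneg _)).1 hi

lemma isOpenQuotientMap_wpMk (χ : Fin m → ℕ) : IsOpenQuotientMap (wpMk m χ) := by
  refine ⟨fun q => q.exists_rep, continuous_quot_mk, fun U hU => ?_⟩
  have hsat : wpMk m χ ⁻¹' (wpMk m χ '' U) = ⋃ t : Circle, (unitMul fun i => t ^ χ i) ⁻¹' U := by
    ext z
    simp only [Set.mem_preimage, Set.mem_image, Set.mem_iUnion, wpMk_eq_iff]
    refine ⟨fun ⟨u, hu, hzu⟩ => ?_, fun ⟨t, ht⟩ => ⟨_, ht, (wRel_equivalence χ).symm ?_⟩⟩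
    · obtain ⟨t, rfl⟩ := (wRel_iff_exists_unitMul χ z u).1 ((wRel_equivalence χ).symm hzu)
      exact ⟨t, hu⟩
    · exact (wRel_iff_exists_unitMul χ z _).2 ⟨t, rfl⟩
  rw [← isQuotientMap_quot_mk.isOpen_preimage]
  exact hsat ▸ isOpen_iUnion fun t =>
    hU.preimage ((continuous_unitMul_pow χ).comp (Continuous.prodMk_right t))

instance (χ : Fin m → ℕ) : T2Space (WP m χ) := by
  rw [t2Space_iff_of_isOpenQuotientMap (isOpenQuotientMap_wpMk χ)]
  have hgraph : {q : Sph m × Sph m | wpMk m χ q.1 = wpMk m χ q.2} =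
      Set.range fun p : Sph m × Circle => (p.1, unitMul (fun i => p.2 ^ χ i) p.1) := by
    ext ⟨z, w⟩
    simp [wpMk_eq_iff, wRel_iff_exists_unitMul, eq_comm]
  rw [hgraph]
  exact (isCompact_range
    (continuous_fst.prodMk ((continuous_unitMul_pow χ).comp continuous_swap))).isClosed

lemma sVal_eq_one_of_dvd {χ ω : Fin m → ℕ} (h : ∀ i, ω i ∣ χ i) : sVal m χ ω = 1 := by
  have h1 : 1 ∈ {s : ℕ | 0 < s ∧ ∀ i, ω i ∣ s * χ i} :=
    ⟨one_pos, fun i => (one_mul (χ i)).symm ▸ h i⟩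
  exact le_antisymm (Nat.sInf_le h1) (Nat.sInf_mem ⟨1, h1⟩).1

lemma dExp_of_dvd {χ ω : Fin m → ℕ} (h : ∀ i, ω i ∣ χ i) :
    dExp m χ ω = fun i => χ i / ω i := by
  ext i
  rw [dExp, sVal_eq_one_of_dvd h, one_mul]

lemma dExp_one (χ : Fin m → ℕ) : dExp m χ (fun _ => 1) = χ := by
  simp [dExp_of_dvd fun i => one_dvd (χ i)]

lemma dExp_mul_left {σ : Fin m → ℕ} (hσ : ∀ i, 1 ≤ σ i) (σ' : Fin m → ℕ) :
    dExp m (fun i => σ i * σ' i) σ = σ' := by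
  rw [dExp_of_dvd fun i => dvd_mul_right _ _]
  ext i
  exact Nat.mul_div_cancel_left _ (hσ i)

lemma dExp_mul_right (σ : Fin m → ℕ) {σ' : Fin m → ℕ} (hσ' : ∀ i, 1 ≤ σ' i) :
    dExp m (fun i => σ i * σ' i) σ' = σ := by
  rw [dExp_of_dvd fun i => dvd_mul_left _ _]
  ext i
  exact Nat.mul_div_cancel _ (hσ' i)

lemma exists_circle_pow_eq_one_mul {a b : ℂ} {n : ℕ} (hn : n ≠ 0) (h : a ^ n = b ^ n) :
    ∃ ξ : Circle, ξ ^ n = 1 ∧ a = ξ * b := by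
  by_cases hb : b = 0
  · refine ⟨1, one_pow n, ?_⟩
    rw [hb, zero_pow hn, pow_eq_zero_iff hn] at h
    rw [h, hb, mul_zero]
  · have hξ : (a / b) ^ n = 1 := by rw [div_pow, h, div_self (pow_ne_zero n hb)]
    let ξ : Circle :=
      ⟨a / b, mem_sphere_zero_iff_norm.2 (Complex.norm_eq_one_of_pow_eq_one hξ hn)⟩
    have hξc : (ξ : ℂ) = a / b := rfl
    refine ⟨ξ, Circle.ext ?_, by rw [hξc, div_mul_cancel₀ a hb]⟩
    rw [Circle.coe_pow, hξc, Circle.coe_one, hξ]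

lemma exists_pow_eq_one_and_pow_eq {G : Type*} [Monoid G] {p q : ℕ} (hpq : p.Coprime q) {ξ : G}
    (hξ : ξ ^ p = 1) : ∃ ρ : G, ρ ^ p = 1 ∧ ρ ^ q = ξ := by
  obtain ⟨k, hk⟩ := exists_pow_eq_self_of_coprime
    (hpq.symm.coprime_dvd_right (orderOf_dvd_of_pow_eq_one hξ))
  exact ⟨ξ ^ k, by rw [← pow_mul, mul_comm, pow_mul, hξ, one_pow],
    by rw [← pow_mul, mul_comm, pow_mul, hk]⟩

section IsEMap

variable {χ ψ ω : Fin m → ℕ}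

lemma IsEMap.exists_apply_wpMk_eq {e : WP m ω → WP m χ} (he : IsEMap m χ ω e)
    (hχ : ∀ i, 1 ≤ χ i) (z : Sph m) :
    ∃ w, IsNorm m χ (powVec m (dExp m χ ω) z) w ∧ e (wpMk m ω z) = wpMk m χ w :=
  (exists_isNorm hχ (powVec_ne_zero _ z)).imp fun w hw => ⟨hw, he.2 z w hw⟩

lemma IsEMap.apply_eq_of_powVec_eq {e : WP m ω → WP m χ} (he : IsEMap m χ ω e)
    (hχ : ∀ i, 1 ≤ χ i) {z z' : Sph m}
    (h : powVec m (dExp m χ ω) z = powVec m (dExp m χ ω) z') :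
    e (wpMk m ω z) = e (wpMk m ω z') := by
  obtain ⟨w, hw, hz⟩ := he.exists_apply_wpMk_eq hχ z
  rw [hz, he.2 z' w (h ▸ hw)]

lemma IsEMap.surjective_of_one {e : WP m (fun _ => 1) → WP m χ}
    (he : IsEMap m χ (fun _ => 1) e) (hχ : ∀ i, 1 ≤ χ i) : Function.Surjective e := by
  refine Quot.ind fun w => ?_
  obtain ⟨r, hr⟩ := exists_isNorm_powVec_eq hχ w
  exact ⟨wpMk m _ r, he.2 r w (by rwa [dExp_one])⟩

lemma IsEMap.comp_wpMk_eq {e₁ : WP m (fun _ => 1) → WP m χ} {e₂ : WP m χ → WP m ψ}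
    (he₁ : IsEMap m χ (fun _ => 1) e₁) (he₂ : IsEMap m ψ χ e₂) (hχ : ∀ i, 1 ≤ χ i)
    (hψ : ∀ i, 1 ≤ ψ i) (hψχ : ∀ i, ψ i = χ i * dExp m ψ χ i) {z w : Sph m}
    (hw : IsNorm m ψ (powVec m ψ z) w) : e₂ (e₁ (wpMk m _ z)) = wpMk m ψ w := by
  obtain ⟨p, hp, h₁⟩ := he₁.exists_apply_wpMk_eq hχ z
  rw [dExp_one] at hp
  obtain ⟨w', hw', h₂⟩ := he₂.exists_apply_wpMk_eq hψ p
  rw [h₁, h₂, hw.unique hψ (hp.trans_powVec hψχ hw')]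

lemma IsEMap.surjective_of_comp {e₁ : WP m (fun _ => 1) → WP m χ} {e₂ : WP m χ → WP m ψ}
    (he₁ : IsEMap m χ (fun _ => 1) e₁) (he₂ : IsEMap m ψ χ e₂) (hχ : ∀ i, 1 ≤ χ i)
    (hψ : ∀ i, 1 ≤ ψ i) (hψχ : ∀ i, ψ i = χ i * dExp m ψ χ i) : Function.Surjective e₂ :=
  Function.Surjective.of_comp (g := e₁) <| Quot.ind fun w => by
    obtain ⟨r, hr⟩ := exists_isNorm_powVec_eq hψ w
    exact ⟨wpMk m _ r, he₁.comp_wpMk_eq he₂ hχ hψ hψχ hr⟩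

lemma IsEMap.exists_wpMk_eq_unitMul_of_apply_eq {e : WP m χ → WP m ψ} (he : IsEMap m ψ χ e)
    (hχ : ∀ i, 1 ≤ χ i) (hψ : ∀ i, 1 ≤ ψ i) (hψχ : ∀ i, ψ i = χ i * dExp m ψ χ i)
    {x x' : Sph m} (h : e (wpMk m χ x) = e (wpMk m χ x')) :
    ∃ ξ : Fin m → Circle, (∀ i, ξ i ^ dExp m ψ χ i = 1) ∧
      wpMk m χ x' = wpMk m χ (unitMul ξ x) := by
  set d := dExp m ψ χ
  have hd : ∀ i, d i ≠ 0 := fun i hdi => by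
    have := hψχ i ▸ hψ i
    rw [hdi, mul_zero] at this
    exact Nat.not_succ_le_zero 0 this
  obtain ⟨w, ⟨l, hl, hw⟩, hx⟩ := he.exists_apply_wpMk_eq hψ x
  obtain ⟨w', ⟨l', hl', hw'⟩, hx'⟩ := he.exists_apply_wpMk_eq hψ x'
  obtain ⟨t, ht⟩ := (wRel_iff_exists_unitMul ψ w w').1
    ((wpMk_eq_iff ψ w w').1 (hx.symm.trans (h.trans hx')))
  have hroot : ∀ i, ∃ ξ : Circle, ξ ^ d i = 1 ∧
      (l' : ℂ) ^ χ i * x'.1 i = ξ * (t ^ χ i * (l : ℂ) ^ χ i * x.1 i) := fun i => by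
    refine exists_circle_pow_eq_one_mul (hd i) ?_
    have hi := congrArg (·.1 i) ht
    simp only [unitMul_apply, hw i, hw' i, powVec, hψχ i, pow_mul, Circle.coe_pow] at hi
    rw [mul_pow, mul_pow, mul_pow, hi]
    ring
  choose ξ hξ hξx using hroot
  refine ⟨ξ, hξ, ?_⟩
  have hx' : x' = unitMul (fun i => ξ i * t ^ χ i) x := by
    refine Sph.eq_of_eq_ofReal_pow_mul hχ (div_pos hl hl') fun i => ?_
    have hl'C : (l' : ℂ) ≠ 0 := Complex.ofReal_ne_zero.2 hl'.ne'
    rw [unitMul_apply, Circle.coe_mul, Circle.coe_pow, Complex.ofReal_div, div_pow]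
    field_simp
    linear_combination hξx i
  rw [hx']
  exact (Quot.sound ⟨t, Circle.norm_coe t, fun i => by
    simp only [unitMul_apply, Circle.coe_mul, Circle.coe_pow]; ring⟩).symm

end IsEMap

def glueRel {X Y Z : Type*} (i₁ : Z → X) (i₂ : Z → Y) (a b : X ⊕ Y) : Prop :=
  ∃ z, a = Sum.inl (i₁ z) ∧ b = Sum.inr (i₂ z)

lemma glueRel.mk_inl_eq_mk_inr {X Y Z : Type*} (i₁ : Z → X) (i₂ : Z → Y) (z : Z) :
    Quot.mk (glueRel i₁ i₂) (Sum.inl (i₁ z)) = Quot.mk (glueRel i₁ i₂) (Sum.inr (i₂ z)) :=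
  Quot.sound ⟨z, rfl, rfl⟩

theorem exists_homeomorph_quot_glueRel {X Y Z W : Type*} [TopologicalSpace X]
    [TopologicalSpace Y] [TopologicalSpace W] [CompactSpace X] [CompactSpace Y] [T2Space W]
    {i₁ : Z → X} {i₂ : Z → Y} {f₁ : X → W} {f₂ : Y → W} (hf₁ : Continuous f₁)
    (hf₂ : Continuous f₂) (hcomm : ∀ z, f₁ (i₁ z) = f₂ (i₂ z)) (hi₂ : Function.Surjective i₂)
    (hf₁_surj : Function.Surjective f₁)
    (hf₁_fiber : ∀ x x', f₁ x = f₁ x' →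
      Quot.mk (glueRel i₁ i₂) (Sum.inl x) = Quot.mk (glueRel i₁ i₂) (Sum.inl x')) :
    ∃ F : Quot (glueRel i₁ i₂) ≃ₜ W,
      (∀ x, F (Quot.mk _ (Sum.inl x)) = f₁ x) ∧ ∀ y, F (Quot.mk _ (Sum.inr y)) = f₂ y := by
  let F : Quot (glueRel i₁ i₂) → W :=
    Quot.lift (Sum.elim f₁ f₂) (by rintro _ _ ⟨z, rfl, rfl⟩; exact hcomm z)
  have hinl : ∀ a : Quot (glueRel i₁ i₂), ∃ x, a = Quot.mk _ (Sum.inl x) := by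
    refine Quot.ind fun a => ?_
    rcases a with x | y
    · exact ⟨x, rfl⟩
    · obtain ⟨z, rfl⟩ := hi₂ y
      exact ⟨i₁ z, (glueRel.mk_inl_eq_mk_inr i₁ i₂ z).symm⟩
  have hF : Function.Bijective F := by
    refine ⟨fun a b hab => ?_, fun w => ?_⟩
    · obtain ⟨x, rfl⟩ := hinl a
      obtain ⟨x', rfl⟩ := hinl b
      exact hf₁_fiber x x' hab
    · obtain ⟨x, rfl⟩ := hf₁_surj w
      exact ⟨Quot.mk _ (Sum.inl x), rfl⟩
  exact ⟨(continuous_quot_lift _ (hf₁.sumElim hf₂)).homeoOfEquivCompactToT2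
    (f := .ofBijective F hF), fun _ => rfl, fun _ => rfl⟩

section Pushout

variable {σ σ' : Fin m → ℕ} {i₁ : WP m (fun _ => 1) → WP m σ'} {i₂ : WP m (fun _ => 1) → WP m σ}

lemma mk_inl_wpMk_unitMul (hσ : ∀ i, 1 ≤ σ i) (hσ' : ∀ i, 1 ≤ σ' i)
    (hcop : ∀ i, (σ i).Coprime (σ' i)) (hi₁ : IsEMap m σ' (fun _ => 1) i₁)
    (hi₂ : IsEMap m σ (fun _ => 1) i₂) {ξ : Fin m → Circle} (hξ : ∀ i, ξ i ^ σ i = 1)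
    (y : Sph m) :
    Quot.mk (glueRel i₁ i₂) (Sum.inl (wpMk m σ' (unitMul ξ y))) =
      Quot.mk (glueRel i₁ i₂) (Sum.inl (wpMk m σ' y)) := by
  choose ρ hρσ hρσ' using fun i => exists_pow_eq_one_and_pow_eq (hcop i) (hξ i)
  obtain ⟨r, hr⟩ := exists_isNorm_powVec_eq hσ' y
  have h₁ : i₁ (wpMk m _ r) = wpMk m σ' y := hi₁.2 r y (by rwa [dExp_one])
  have h₁ρ : i₁ (wpMk m _ (unitMul ρ r)) = wpMk m σ' (unitMul ξ y) := by
    refine hi₁.2 _ _ ?_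
    convert hr.unitMul ξ using 1
    ext i
    rw [dExp_one, powVec, unitMul_apply, mul_pow, ← Circle.coe_pow, hρσ', powVec]
  have h₂ : i₂ (wpMk m _ (unitMul ρ r)) = i₂ (wpMk m _ r) := by
    refine hi₂.apply_eq_of_powVec_eq hσ ?_
    ext i
    rw [dExp_one, powVec, unitMul_apply, mul_pow, ← Circle.coe_pow, hρσ, Circle.coe_one,
      one_mul, powVec]
  rw [← h₁ρ, ← h₁, glueRel.mk_inl_eq_mk_inr, glueRel.mk_inl_eq_mk_inr, h₂]

lemma mk_inl_eq_of_apply_eq (hσ : ∀ i, 1 ≤ σ i) (hσ' : ∀ i, 1 ≤ σ' i)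
    (hcop : ∀ i, (σ i).Coprime (σ' i)) (hi₁ : IsEMap m σ' (fun _ => 1) i₁)
    (hi₂ : IsEMap m σ (fun _ => 1) i₂) {f' : WP m σ' → WP m (fun i => σ i * σ' i)}
    (hf' : IsEMap m (fun i => σ i * σ' i) σ' f') {x x' : WP m σ'} (h : f' x = f' x') :
    Quot.mk (glueRel i₁ i₂) (Sum.inl x) = Quot.mk (glueRel i₁ i₂) (Sum.inl x') := by
  induction x using Quot.ind with | _ x =>
  induction x' using Quot.ind with | _ x' =>
  obtain ⟨ξ, hξ, hx'⟩ := hf'.exists_wpMk_eq_unitMul_of_apply_eq hσ'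
    (fun i => Nat.mul_pos (hσ i) (hσ' i)) (fun i => by rw [dExp_mul_right σ hσ', mul_comm]) h
  rw [dExp_mul_right σ hσ'] at hξ
  change Quot.mk _ (Sum.inl (wpMk m σ' x)) = Quot.mk _ (Sum.inl (wpMk m σ' x'))
  rw [hx', mk_inl_wpMk_unitMul hσ hσ' hcop hi₁ hi₂ hξ x]

end Pushout

end WeightedProjectiveSpace

theorem statement9_general (n : ℕ) (σ σ' : Fin (n + 1) → ℕ)
    (hσ : ∀ i, 1 ≤ σ i) (hσ' : ∀ i, 1 ≤ σ' i)
    (hcop : ∀ i j, Nat.gcd (σ i) (σ' j) = 1)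
    (i1 : WP (n + 1) (fun _ => 1) → WP (n + 1) σ')
    (hi1 : IsEMap (n + 1) σ' (fun _ => 1) i1)
    (i2 : WP (n + 1) (fun _ => 1) → WP (n + 1) σ)
    (hi2 : IsEMap (n + 1) σ (fun _ => 1) i2)
    (f' : WP (n + 1) σ' → WP (n + 1) (fun i => σ i * σ' i))
    (hf' : IsEMap (n + 1) (fun i => σ i * σ' i) σ' f')
    (f : WP (n + 1) σ → WP (n + 1) (fun i => σ i * σ' i))
    (hf : IsEMap (n + 1) (fun i => σ i * σ' i) σ f) :
    ∃ F : Quot (fun a b : WP (n + 1) σ' ⊕ WP (n + 1) σ =>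
        ∃ z : WP (n + 1) (fun _ => 1), a = Sum.inl (i1 z) ∧ b = Sum.inr (i2 z)) ≃ₜ
        WP (n + 1) (fun i => σ i * σ' i),
      (∀ x : WP (n + 1) σ', F (Quot.mk _ (Sum.inl x)) = f' x) ∧
      (∀ y : WP (n + 1) σ, F (Quot.mk _ (Sum.inr y)) = f y) := by
  have hτ : ∀ i, 1 ≤ σ i * σ' i := fun i => Nat.mul_pos (hσ i) (hσ' i)
  have hf'τ : ∀ i, σ i * σ' i = σ' i * dExp _ (fun i => σ i * σ' i) σ' i := fun i => by
    rw [dExp_mul_right σ hσ', mul_comm]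
  have hfτ : ∀ i, σ i * σ' i = σ i * dExp _ (fun i => σ i * σ' i) σ i := fun i => by
    rw [dExp_mul_left hσ σ']
  have hcomm : ∀ z, f' (i1 z) = f (i2 z) := Quot.ind fun z => by
    obtain ⟨w, hw⟩ := exists_isNorm hτ (powVec_ne_zero _ z)
    exact (hi1.comp_wpMk_eq hf' hσ' hτ hf'τ hw).trans (hi2.comp_wpMk_eq hf hσ hτ hfτ hw).symm
  exact exists_homeomorph_quot_glueRel hf'.1 hf.1 hcomm (hi2.surjective_of_one hσ)
    (hi1.surjective_of_comp hf' hσ' hτ hf'τ)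
    fun _ _ => mk_inl_eq_of_apply_eq hσ hσ' (fun i => hcop i i) hi1 hi2 hf'

/-- For coprime weight vectors `σ, σ'` with coordinatewise product `σσ'`,
let `R` be the quotient of `P(σ') ⊔ P(σ)` by the equivalence relation generated by
`e(σ'/1)(z) ∼ e(σ/1)(z)` for `z ∈ ℂP^n`. Then the map `R → P(σσ')` induced by
`e(σσ'/σ')` and `e(σσ'/σ)` is well defined and a homeomorphism; i.e. the square of
`e`-maps is a pushout square of topological spaces. -/
theorem statement9 (n : ℕ) (hn : 1 ≤ n) (σ σ' : Fin (n + 1) → ℕ)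
    (hσ : ∀ i, 1 ≤ σ i) (hσ' : ∀ i, 1 ≤ σ' i)
    (hcop : ∀ i j, Nat.gcd (σ i) (σ' j) = 1)
    (i1 : WP (n + 1) (fun _ => 1) → WP (n + 1) σ')
    (hi1 : IsEMap (n + 1) σ' (fun _ => 1) i1)
    (i2 : WP (n + 1) (fun _ => 1) → WP (n + 1) σ)
    (hi2 : IsEMap (n + 1) σ (fun _ => 1) i2)
    (f' : WP (n + 1) σ' → WP (n + 1) (fun i => σ i * σ' i))
    (hf' : IsEMap (n + 1) (fun i => σ i * σ' i) σ' f')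
    (f : WP (n + 1) σ → WP (n + 1) (fun i => σ i * σ' i))
    (hf : IsEMap (n + 1) (fun i => σ i * σ' i) σ f) :
    ∃ F : Quot (fun a b : WP (n + 1) σ' ⊕ WP (n + 1) σ =>
        ∃ z : WP (n + 1) (fun _ => 1), a = Sum.inl (i1 z) ∧ b = Sum.inr (i2 z)) ≃ₜ
        WP (n + 1) (fun i => σ i * σ' i),
      (∀ x : WP (n + 1) σ', F (Quot.mk _ (Sum.inl x)) = f' x) ∧
      (∀ y : WP (n + 1) σ, F (Quot.mk _ (Sum.inr y)) = f y) :=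
  statement9_general n σ σ' hσ hσ' hcop i1 hi1 i2 hi2 f' hf' f hf
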